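/- arXiv:1802.00881 — 2 statements merged into one kernel-verified Lean document; each statement's English description precedes it below -/
import Mathlib

section
/- Let two reclosers share shape constants a > 0, m > 0, c > 0, b ≥ 0, K ≥ 0 and pickup current Iₚ > 0, with dial settings D₁ < D₂, and let ΔT ≥ 0 be a required coordination margin. Then the margin condition T_{D₂}(I) − T_{D₁}(I) ≥ ΔT holds for every fault current I > Iₚ·c^(1/m) if and only if (D₂ − D₁)·b ≥ ΔT. -/
/-! The margin `T_{D₂}(I) - T_{D₁}(I)` equals `(D₂ - D₁)·b + a(D₂ - D₁)/x` with
`x = (I/Iₚ)^m - c`, and as `I` runs over the domain, `x` runs over all of `(0, ∞)`.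
The inverse-time term is positive but tends to `0` as `x → ∞`, so the infimum of the
margin over the domain is `(D₂ - D₁)·b`. -/

open Set Filter Topology

lemma image_div_rpow_sub_Ioi {Ip m c : ℝ} (hIp : 0 < Ip) (hm : 0 < m) (hc : 0 ≤ c) :
    (fun I => (I / Ip) ^ m - c) '' Ioi (Ip * c ^ (1 / m)) = Ioi 0 := by
  ext x
  simp only [mem_image, mem_Ioi, one_div]
  constructor
  · rintro ⟨I, hI, rfl⟩
    have hroot : c ^ m⁻¹ < I / Ip := (lt_div_iff₀' hIp).2 hI
    have hI' : 0 ≤ I / Ip := (Real.rpow_nonneg hc _).trans hroot.le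
    exact sub_pos.2 ((Real.rpow_inv_lt_iff_of_pos hc hI' hm).1 hroot)
  · intro hx
    have hcx : 0 ≤ c + x := by linarith
    refine ⟨Ip * (c + x) ^ m⁻¹, ?_, ?_⟩
    · gcongr
      linarith
    · rw [mul_div_cancel_left₀ _ hIp.ne', Real.rpow_inv_rpow hcx hm.ne']
      ring

lemma forall_le_div_add_iff {k β t : ℝ} (hk : 0 ≤ k) :
    (∀ x ∈ Ioi (0 : ℝ), t ≤ k / x + β) ↔ t ≤ β := by
  constructor
  · intro h
    have hlim : Tendsto (fun x => k / x + β) atTop (𝓝 β) := by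
      simpa using (tendsto_const_nhds.div_atTop tendsto_id).add_const β
    exact ge_of_tendsto hlim (eventually_gt_atTop 0 |>.mono h)
  · intro h x hx
    have : 0 ≤ k / x := div_nonneg hk hx.le
    linarith

theorem tci_coordination_margin_iff_general (a m c b K Ip D₁ D₂ ΔT : ℝ)
    (ha : 0 < a) (hm : 0 < m) (hc : 0 < c)
    (hIp : 0 < Ip) (hD₁₂ : D₁ < D₂) :
    (∀ I : ℝ, Ip * c ^ (1 / m) < I →
        ΔT ≤ (a * D₂ / ((I / Ip) ^ m - c) + b * D₂ + K) -
          (a * D₁ / ((I / Ip) ^ m - c) + b * D₁ + K)) ↔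
      ΔT ≤ (D₂ - D₁) * b := by
  have hmargin : ∀ x : ℝ, (a * D₂ / x + b * D₂ + K) - (a * D₁ / x + b * D₁ + K) =
      a * (D₂ - D₁) / x + (D₂ - D₁) * b := fun x => by ring
  simp only [hmargin]
  rw [← forall_le_div_add_iff (mul_nonneg ha.le (sub_nonneg.2 hD₁₂.le)),
    ← image_div_rpow_sub_Ioi hIp hm hc.le, forall_mem_image]
  rfl

/-- For two reclosers sharing shape constants and pickup current, with dial
settings `D₁ < D₂` and required margin `ΔT ≥ 0`, the coordination-margin
condition `T_{D₂}(I) − T_{D₁}(I) ≥ ΔT` holds for every fault current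
`I > Iₚ·c^(1/m)` if and only if `(D₂ − D₁)·b ≥ ΔT`. -/
theorem tci_coordination_margin_iff (a m c b K Ip D₁ D₂ ΔT : ℝ)
    (ha : 0 < a) (hm : 0 < m) (hc : 0 < c) (hb : 0 ≤ b) (hK : 0 ≤ K)
    (hIp : 0 < Ip) (hD₁ : 0 < D₁) (hD₁₂ : D₁ < D₂) (hΔT : 0 ≤ ΔT) :
    (∀ I : ℝ, Ip * c ^ (1 / m) < I →
        ΔT ≤ (a * D₂ / ((I / Ip) ^ m - c) + b * D₂ + K) -
          (a * D₁ / ((I / Ip) ^ m - c) + b * D₁ + K)) ↔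
      ΔT ≤ (D₂ - D₁) * b :=
  tci_coordination_margin_iff_general a m c b K Ip D₁ D₂ ΔT ha hm hc hIp hD₁₂
end

section
/- Let T_P and T_B be the response-time curves of a primary and a backup recloser, with T_P antitone on an interval S of fault currents. Suppose they are coordinated before DG installation: T_B(I) − T_P(I) ≥ ΔT for every I ∈ S. After DG is installed between the two reclosers, the primary sees fault current I + ΔI with disparity ΔI ≥ 0 while the backup still sees I. Then for every I with I ∈ S and I + ΔI ∈ S, the coordination condition still holds: T_B(I) − T_P(I + ΔI) ≥ ΔT. That is, DG's fault current contribution between two reclosers never disrupts recloser–recloser coordination. -/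
theorem dg_preserves_recloser_coordination_general (T_P T_B : ℝ → ℝ) (S : Set ℝ)
    (hanti : AntitoneOn T_P S) (ΔT ΔI : ℝ)
    (hΔI : 0 ≤ ΔI) (hcoord : ∀ I ∈ S, ΔT ≤ T_B I - T_P I) :
    ∀ I, I ∈ S → I + ΔI ∈ S → ΔT ≤ T_B I - T_P (I + ΔI) := by
  intro I hI hIΔ
  calc ΔT ≤ T_B I - T_P I := hcoord I hI
    _ ≤ T_B I - T_P (I + ΔI) :=
      sub_le_sub_left (hanti hI hIΔ (le_add_of_nonneg_right hΔI)) _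

/-- Suppose the primary response-time curve `T_P` is antitone on an interval
`S` of fault currents and the primary/backup pair is coordinated before DG
installation: `T_B(I) − T_P(I) ≥ ΔT` for every `I ∈ S`. After DG is installed
between the two reclosers, the primary sees fault current `I + ΔI` with
disparity `ΔI ≥ 0` while the backup still sees `I`; then the coordination
condition still holds: DG's fault current contribution between two reclosers
never disrupts recloser–recloser coordination. -/
theorem dg_preserves_recloser_coordination (T_P T_B : ℝ → ℝ) (S : Set ℝ)
    (hS : S.OrdConnected) (hanti : AntitoneOn T_P S) (ΔT ΔI : ℝ)
    (hΔI : 0 ≤ ΔI) (hcoord : ∀ I ∈ S, ΔT ≤ T_B I - T_P I) :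
    ∀ I, I ∈ S → I + ΔI ∈ S → ΔT ≤ T_B I - T_P (I + ΔI) :=
  dg_preserves_recloser_coordination_general T_P T_B S hanti ΔT ΔI hΔI hcoord
end
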